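/- arXiv:1710.10855 — 2 statements merged into one kernel-verified Lean document; each statement's English description precedes it below -/
import Mathlib

section
/- For every homeomorphism f : [0,1] → [0,1], the height of the cyclic transformation group generated by f is infinite: h(⟨f⟩,[0,1]) = +∞, i.e., the collection of orbit closures {closure({f^n(x) : n ∈ ℤ}) : x ∈ [0,1]} is infinite. -/
open Set Topology unitInterval

noncomputable section

/-- Group structure on self-homeomorphisms (composition). -/
instance homeoGroup {X : Type*} [TopologicalSpace X] : Group (X ≃ₜ X) where
  mul f g := g.trans f
  one := Homeomorph.refl X
  inv := Homeomorph.symm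
  mul_assoc _ _ _ := Homeomorph.ext fun _ => rfl
  one_mul _ := Homeomorph.ext fun _ => rfl
  mul_one _ := Homeomorph.ext fun _ => rfl
  inv_mul_cancel f := Homeomorph.ext fun x => f.symm_apply_apply x

/-- A set is invariant under a group of homeomorphisms. -/
def InvariantUnder {X : Type*} [TopologicalSpace X] (G : Subgroup (X ≃ₜ X)) (Y : Set X) : Prop :=
  ∀ g ∈ G, ∀ y ∈ Y, g y ∈ Y

/-- Lengths of strictly increasing chains of nonempty closed invariant sets ending at `univ`. -/
def heightSet {X : Type*} [TopologicalSpace X] (G : Subgroup (X ≃ₜ X)) : Set ℕ :=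
  {n | ∃ Y : Fin (n + 1) → Set X,
    StrictMono Y ∧ (∀ i, (Y i).Nonempty ∧ IsClosed (Y i) ∧ InvariantUnder G (Y i)) ∧
    Y (Fin.last n) = Set.univ}

/-- The height of a transformation group. -/
def height {X : Type*} [TopologicalSpace X] (G : Subgroup (X ≃ₜ X)) : ℕ∞ :=
  sSup ((fun n : ℕ => (n : ℕ∞)) '' heightSet G)

/-- The set of achievable heights on phase space `X`. -/
def PH (X : Type*) [TopologicalSpace X] : Set ℕ∞ :=
  {h | ∃ G : Subgroup (X ≃ₜ X), height G = h}

end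

/-! A homeomorphism of `[0,1]` is monotone or antitone, so `f²` is increasing and every
`f²`-orbit is a monotone `ℤ`-indexed sequence; the closure of such a sequence adds at most its
supremum and infimum. Hence every `f`-orbit closure is countable. Since `[0,1]` is uncountable,
finitely many orbit closures cannot cover it, and adjoining to a countable closed invariant set
the orbit closure of a point outside it yields an infinite strictly increasing chain of closed
invariant sets. -/

theorem Monotone.countable_closure_range {α : Type*} [LinearOrder α] [TopologicalSpace α]
    [OrderClosedTopology α] {s : ℤ → α} (hs : Monotone s) : (closure (range s)).Countable := by
  have hub : (closure (range s) ∩ upperBounds (range s)).Subsingleton := fun a ha b hb =>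
    le_antisymm ((upperBounds_closure (range s) ▸ hb.2) ha.1)
      ((upperBounds_closure (range s) ▸ ha.2) hb.1)
  have hlb : (closure (range s) ∩ lowerBounds (range s)).Subsingleton := fun a ha b hb =>
    le_antisymm ((lowerBounds_closure (range s) ▸ ha.2) hb.1)
      ((lowerBounds_closure (range s) ▸ hb.2) ha.1)
  refine ((countable_range s).union (hub.countable.union hlb.countable)).mono fun z hz => ?_
  by_contra hz'
  simp only [mem_union, mem_inter_iff, hz, true_and, not_or] at hz'
  obtain ⟨hzs, hzub, hzlb⟩ := hz'
  obtain ⟨_, ⟨n, rfl⟩, hzn⟩ : ∃ y ∈ range s, z < y := by simpa [upperBounds] using hzub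
  obtain ⟨_, ⟨m, rfl⟩, hmz⟩ : ∃ y ∈ range s, y < z := by simpa [lowerBounds] using hzlb
  -- `range s` meets the neighbourhood `Ioo (s m) (s n)` of `z` in a finite, hence closed, set.
  have hfin : (Ioo (s m) (s n) ∩ range s).Finite := by
    refine ((finite_Icc m n).image s).subset ?_
    rintro _ ⟨⟨hmk, hkn⟩, k, rfl⟩
    exact ⟨k, ⟨(hs.reflect_lt hmk).le, (hs.reflect_lt hkn).le⟩, rfl⟩
  have hz_mem := isOpen_Ioo.inter_closure ⟨⟨hmz, hzn⟩, hz⟩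
  rw [hfin.isClosed.closure_eq] at hz_mem
  exact hzs hz_mem.2

theorem Antitone.countable_closure_range {α : Type*} [LinearOrder α] [TopologicalSpace α]
    [OrderClosedTopology α] {s : ℤ → α} (hs : Antitone s) : (closure (range s)).Countable :=
  hs.dual_right.countable_closure_range

section OrbitClosure

variable {X : Type*} [TopologicalSpace X]

def orbitClosure (f : X ≃ₜ X) (x : X) : Set X :=
  closure (range fun n : ℤ => (f ^ n) x)

lemma mem_orbitClosure_self (f : X ≃ₜ X) (x : X) : x ∈ orbitClosure f x :=
  subset_closure ⟨0, show (f ^ (0 : ℤ)) x = x by rw [zpow_zero]; rfl⟩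

lemma isClosed_orbitClosure (f : X ≃ₜ X) (x : X) : IsClosed (orbitClosure f x) :=
  isClosed_closure

lemma invariantUnder_orbitClosure (f : X ≃ₜ X) (x : X) :
    InvariantUnder (Subgroup.zpowers f) (orbitClosure f x) := by
  intro g hg y hy
  obtain ⟨m, rfl⟩ := Subgroup.mem_zpowers_iff.1 hg
  have hmaps : MapsTo ⇑(f ^ m) (range fun n : ℤ => (f ^ n) x) (range fun n : ℤ => (f ^ n) x) := by
    rintro _ ⟨n, rfl⟩
    exact ⟨m + n, show (f ^ (m + n)) x = (f ^ m) ((f ^ n) x) by rw [zpow_add]; rfl⟩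
  exact hmaps.closure (f ^ m).continuous hy

lemma InvariantUnder.union {G : Subgroup (X ≃ₜ X)} {A B : Set X} (hA : InvariantUnder G A)
    (hB : InvariantUnder G B) : InvariantUnder G (A ∪ B) :=
  fun g hg y hy => hy.imp (hA g hg y) (hB g hg y)

lemma orbitClosure_subset_union_sq (f : X ≃ₜ X) (x : X) :
    orbitClosure f x ⊆ orbitClosure (f ^ 2) x ∪ orbitClosure (f ^ 2) (f x) := by
  rw [orbitClosure, orbitClosure, orbitClosure, ← closure_union]
  refine closure_mono ?_
  rintro _ ⟨n, rfl⟩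
  obtain ⟨k, rfl | rfl⟩ := Int.even_or_odd' n
  · exact Or.inl ⟨k, show ((f ^ 2) ^ k) x = (f ^ (2 * k)) x by rw [zpow_mul, zpow_ofNat]⟩
  · exact Or.inr ⟨k, show ((f ^ 2) ^ k) (f x) = (f ^ (2 * k + 1)) x by
      rw [zpow_add_one, zpow_mul, zpow_ofNat]; rfl⟩

theorem height_eq_top_of_strictMono (G : Subgroup (X ≃ₜ X)) {U : ℕ → Set X} (hU : StrictMono U)
    (hUG : ∀ k, (U k).Nonempty ∧ IsClosed (U k) ∧ InvariantUnder G (U k))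
    (hU_ne : ∀ k, U k ≠ univ) : height G = ⊤ := by
  have hchain : ∀ n, n ∈ heightSet G := fun n => by
    refine ⟨fun i => if (i : ℕ) < n then U i else univ, ?_, fun i => ?_, by simp⟩
    · refine Fin.strictMono_iff_lt_succ.2 fun i => ?_
      simp only [Fin.val_castSucc, i.isLt, if_true, Fin.val_succ]
      split_ifs
      · exact hU (Nat.lt_succ_self i)
      · exact (hU_ne i).lt_top
    · dsimp only
      split_ifs
      · exact hUG i
      · exact ⟨(hUG 0).1.mono (subset_univ _), isClosed_univ, fun _ _ _ _ => mem_univ _⟩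
  rw [height, eq_univ_of_forall hchain, image_univ, sSup_range]
  exact ENat.iSup_natCast

variable [Uncountable X] {f : X ≃ₜ X}

theorem infinite_range_orbitClosure (hf : ∀ x, (orbitClosure f x).Countable) :
    (range (orbitClosure f)).Infinite := fun hfin =>
  not_countable_univ <| (hfin.countable.sUnion (forall_mem_range.2 hf)).mono fun x _ =>
    mem_sUnion_of_mem (mem_orbitClosure_self f x) (mem_range_self x)

theorem height_zpowers_eq_top (hf : ∀ x, (orbitClosure f x).Countable) :
    height (Subgroup.zpowers f) = ⊤ := by
  let P : Set X → Prop := fun K =>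
    K.Countable ∧ K.Nonempty ∧ IsClosed K ∧ InvariantUnder (Subgroup.zpowers f) K
  have hP : ∀ x, P (orbitClosure f x) := fun x =>
    ⟨hf x, ⟨x, mem_orbitClosure_self f x⟩, isClosed_orbitClosure f x,
      invariantUnder_orbitClosure f x⟩
  have : NoMaxOrder {K // P K} := ⟨fun ⟨K, hKc, hKne, hKcl, hKinv⟩ => by
    obtain ⟨x, hx⟩ := nonempty_compl.2 fun h : K = univ => not_countable_univ (h ▸ hKc)
    obtain ⟨hxc, -, hxcl, hxinv⟩ := hP x
    refine ⟨⟨K ∪ orbitClosure f x, hKc.union hxc, hKne.mono subset_union_left,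
      hKcl.union hxcl, hKinv.union hxinv⟩, ?_⟩
    exact Subtype.mk_lt_mk.2 (left_lt_sup.2 fun h => hx (h (mem_orbitClosure_self f x)))⟩
  obtain ⟨U, hU, -⟩ := Nat.exists_strictMono' (⟨_, hP (Classical.arbitrary X)⟩ : {K // P K})
  exact height_eq_top_of_strictMono _ ((Subtype.strictMono_coe _).comp hU) (fun k => (U k).2.2)
    fun k (h : (U k : Set X) = univ) => not_countable_univ (h ▸ (U k).2.1)

end OrbitClosure

section LinearOrder

variable {X : Type*} [LinearOrder X] [TopologicalSpace X]

lemma Homeomorph.strictMono_symm {g : X ≃ₜ X} (hg : StrictMono g) : StrictMono g.symm :=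
  fun a b hab => hg.lt_iff_lt.1 (by simpa using hab)

lemma Homeomorph.strictMono_zpow {g : X ≃ₜ X} (hg : StrictMono g) (n : ℤ) :
    StrictMono ⇑(g ^ n) := by
  induction n using Int.induction_on with
  | zero => exact strictMono_id
  | succ n ih => rw [zpow_add_one]; exact ih.comp hg
  | pred n ih => rw [zpow_sub_one]; exact ih.comp (strictMono_symm hg)

variable [OrderClosedTopology X]

theorem countable_orbitClosure_of_strictMono {g : X ≃ₜ X} (hg : StrictMono g) (x : X) :
    (orbitClosure g x).Countable := by
  have hstep (n : ℤ) : (g ^ (n + 1)) x = (g ^ n) (g x) := by rw [zpow_add_one]; rfl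
  rcases le_total x (g x) with h | h
  · exact Monotone.countable_closure_range <| monotone_int_of_le_succ fun n => by
      rw [hstep]; exact (Homeomorph.strictMono_zpow hg n).monotone h
  · exact Antitone.countable_closure_range <| antitone_int_of_succ_le fun n => by
      rw [hstep]; exact (Homeomorph.strictMono_zpow hg n).monotone h

theorem countable_orbitClosure {f : X ≃ₜ X} (hf : StrictMono f ∨ StrictAnti f) (x : X) :
    (orbitClosure f x).Countable := by
  have hf2 : StrictMono ⇑(f ^ 2) := by
    rw [sq]
    rcases hf with hf | hf
    exacts [hf.comp hf, hf.comp hf]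
  exact ((countable_orbitClosure_of_strictMono hf2 x).union
    (countable_orbitClosure_of_strictMono hf2 (f x))).mono (orbitClosure_subset_union_sq f x)

end LinearOrder

instance unitInterval.uncountable : Uncountable I :=
  Cardinal.aleph0_lt_mk_iff.1 <| by
    rw [Cardinal.mk_Icc_real zero_lt_one]; exact Cardinal.aleph0_lt_continuum

/-- For every homeomorphism `f` of `[0,1]`, the cyclic transformation group `⟨f⟩` has
infinitely many orbit closures and infinite height. -/
theorem cyclic_height_unitInterval_top (f : I ≃ₜ I) :
    {S : Set I | ∃ x : I, S = closure (Set.range fun n : ℤ => (f ^ n) x)}.Infinite ∧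
    height (Subgroup.zpowers f) = ⊤ := by
  have hf : ∀ x, (orbitClosure f x).Countable :=
    countable_orbitClosure (f.continuous.strictMono_of_inj f.injective)
  refine ⟨?_, height_zpowers_eq_top hf⟩
  simpa only [orbitClosure, range, eq_comm] using infinite_range_orbitClosure hf
end

section
/- Let X be a topological graph (a compact connected metric space that is a finite union of arcs meeting only at endpoints). Then h(Homeo(X),X) < +∞. Quantitatively, if X is not a circle and V and E denote its sets of vertices and edges, then every orbit closure of the Homeo(X)-action is a union of vertices or a union of closed edges, so the number of orbit closures is at most 2^{|V|} + 2^{|E|} − 2, giving h(Homeo(X),X) ≤ 2^{|V|} + 2^{|E|} − 3. -/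
open Set Topology unitInterval

noncomputable section

/-- A presentation of a topological graph: a finite union of arcs, any two of which
meet in at most their endpoints. -/
structure GraphStruct (X : Type*) [TopologicalSpace X] where
  numEdges : ℕ
  edge : Fin numEdges → unitInterval → X
  cont : ∀ i, Continuous (edge i)
  inj : ∀ i, Function.Injective (edge i)
  cover : ∀ x : X, ∃ i t, edge i t = x
  meet : ∀ i j, i ≠ j → ∀ s t, edge i s = edge j t → (s = 0 ∨ s = 1) ∧ (t = 0 ∨ t = 1)

/-- The vertices: endpoints of the arcs. -/
def GraphStruct.vertexSet {X : Type*} [TopologicalSpace X] (G : GraphStruct X) : Set X :=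
  {v | ∃ i, G.edge i 0 = v ∨ G.edge i 1 = v}

/-- The degree of a point: the number of edge-ends at it. -/
def GraphStruct.degree {X : Type*} [TopologicalSpace X] (G : GraphStruct X) (v : X) : ℕ :=
  Set.ncard {p : Fin G.numEdges × Bool | G.edge p.1 (if p.2 then 1 else 0) = v}

/-- The (closed) edges, as subsets of `X`. -/
def GraphStruct.edgeSet {X : Type*} [TopologicalSpace X] (G : GraphStruct X) : Set (Set X) :=
  Set.range fun i => Set.range (G.edge i)

end

/-! Points in the interior of an edge are moved to each other by homeomorphisms supported on
that edge (reparametrise it by `t ↦ t ^ c`), so an orbit closure containing one of them contains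
the whole closed edge. Hence an orbit closure is either a finite set of vertices or, since
homeomorphisms are open maps and every open set around a point of an edge meets its interior, the
union of the closed edges it contains. In a strictly increasing chain `Y₀ ⊂ ⋯ ⊂ Yₙ` of closed
invariant sets, the orbit closures of points of `Yₖ \ Yₖ₋₁` are pairwise distinct, so the height is
less than the number of orbit closures. -/

noncomputable section

namespace unitInterval

lemma closure_Ioo_zero_one : closure (Ioo (0 : I) 1) = univ := by
  rw [closure_Ioo zero_ne_one, univ_eq_Icc]

lemma dense_Ioo_zero_one : Dense (Ioo (0 : I) 1) :=
  dense_iff_closure_eq.2 closure_Ioo_zero_one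

lemma eq_zero_or_eq_one_of_notMem_Ioo {s : I} (hs : s ∉ Ioo 0 1) : s = 0 ∨ s = 1 := by
  simp only [mem_Ioo, not_and_or, not_lt] at hs
  exact hs.imp (le_antisymm · nonneg') (le_antisymm le_one')

def rpowHomeomorph {c : ℝ} (hc : 0 < c) : I ≃ₜ I where
  toFun t := ⟨(t : ℝ) ^ c, Real.rpow_nonneg t.2.1 c, Real.rpow_le_one t.2.1 t.2.2 hc.le⟩
  invFun t := ⟨(t : ℝ) ^ c⁻¹, Real.rpow_nonneg t.2.1 _, Real.rpow_le_one t.2.1 t.2.2 (by positivity)⟩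
  left_inv t := Subtype.ext (Real.rpow_rpow_inv t.2.1 hc.ne')
  right_inv t := Subtype.ext (Real.rpow_inv_rpow t.2.1 hc.ne')
  continuous_toFun := ((Real.continuous_rpow_const hc.le).comp continuous_subtype_val).subtype_mk _
  continuous_invFun :=
    ((Real.continuous_rpow_const (by positivity)).comp continuous_subtype_val).subtype_mk _

lemma exists_homeomorph_apply_eq {s t : I} (hs : s ∈ Ioo 0 1) (ht : t ∈ Ioo 0 1) :
    ∃ φ : I ≃ₜ I, φ 0 = 0 ∧ φ 1 = 1 ∧ φ s = t := by
  have hlog_s : Real.log s < 0 := Real.log_neg hs.1 hs.2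
  have hlog_t : Real.log t < 0 := Real.log_neg ht.1 ht.2
  -- `s ^ c = t` for `c = log t / log s`
  have hc : 0 < Real.log t / Real.log s := div_pos_of_neg_of_neg hlog_t hlog_s
  refine ⟨rpowHomeomorph hc, Subtype.ext (Real.zero_rpow hc.ne'), Subtype.ext (Real.one_rpow _),
    Subtype.ext ?_⟩
  change (s : ℝ) ^ (Real.log t / Real.log s) = t
  rw [Real.rpow_def_of_pos hs.1, mul_div_cancel₀ _ hlog_s.ne, Real.exp_log ht.1]

end unitInterval

section Orbits

variable {X : Type*} [TopologicalSpace X]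

def homeoOrbit (x : X) : Set X := range fun f : X ≃ₜ X => f x

variable (X) in
def orbitClosures : Set (Set X) := {S | ∃ x : X, S = closure (homeoOrbit x)}

lemma mem_homeoOrbit_self (x : X) : x ∈ homeoOrbit x := ⟨Homeomorph.refl X, rfl⟩

lemma homeoOrbit_eq_of_mem {x y : X} (h : y ∈ homeoOrbit x) : homeoOrbit y = homeoOrbit x := by
  obtain ⟨f, rfl⟩ := h
  ext z
  constructor
  · rintro ⟨g, rfl⟩
    exact ⟨f.trans g, rfl⟩
  · rintro ⟨g, rfl⟩
    exact ⟨f.symm.trans g, by simp⟩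

lemma invariantUnder_closure_homeoOrbit (x : X) : InvariantUnder ⊤ (closure (homeoOrbit x)) := by
  intro f _ z hz
  have hmaps : MapsTo f (homeoOrbit x) (homeoOrbit x) := by
    rintro _ ⟨g, rfl⟩
    exact ⟨g.trans f, rfl⟩
  exact hmaps.closure f.continuous hz

lemma closure_homeoOrbit_subset {Y : Set X} (hY : IsClosed Y) (hYinv : InvariantUnder ⊤ Y)
    {z : X} (hz : z ∈ Y) : closure (homeoOrbit z) ⊆ Y :=
  closure_minimal (by rintro _ ⟨f, rfl⟩; exact hYinv f (Subgroup.mem_top f) z hz) hY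

lemma succ_le_ncard_orbitClosures (hfin : (orbitClosures X).Finite) {n : ℕ}
    (hn : n ∈ heightSet (⊤ : Subgroup (X ≃ₜ X))) : n + 1 ≤ (orbitClosures X).ncard := by
  obtain ⟨Y, hmono, hY, -⟩ := hn
  have hnew : ∀ k, ∃ z ∈ Y k, ∀ j < k, z ∉ Y j := by
    intro k
    rcases k.eq_zero_or_eq_succ with rfl | ⟨k, rfl⟩
    · obtain ⟨z, hz⟩ := (hY 0).1
      exact ⟨z, hz, fun j hj => absurd hj (Fin.not_lt_zero j)⟩
    · obtain ⟨z, hz, hzk⟩ := exists_of_ssubset (hmono (Fin.castSucc_lt_succ (i := k)))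
      exact ⟨z, hz, fun j hj hzj => hzk (hmono.monotone (Fin.le_castSucc_iff.2 hj) hzj)⟩
  choose z hzY hznew using hnew
  have hinj : Function.Injective fun k => closure (homeoOrbit (z k)) := by
    refine Function.Injective.of_lt_imp_ne fun k l hkl heq => hznew l k hkl ?_
    have hzl : z l ∈ closure (homeoOrbit (z k)) := heq ▸ subset_closure (mem_homeoOrbit_self _)
    exact closure_homeoOrbit_subset (hY k).2.1 (hY k).2.2 (hzY k) hzl
  calc n + 1 = (univ : Set (Fin (n + 1))).ncard := by simp
    _ ≤ (orbitClosures X).ncard :=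
      ncard_le_ncard_of_injOn _ (fun k _ => ⟨z k, rfl⟩) hinj.injOn hfin

lemma height_top_le_ncard_orbitClosures_sub_one (hfin : (orbitClosures X).Finite) :
    height (⊤ : Subgroup (X ≃ₜ X)) ≤ ((orbitClosures X).ncard - 1 : ℕ) := by
  refine sSup_le ?_
  rintro _ ⟨n, hn, rfl⟩
  have := succ_le_ncard_orbitClosures hfin hn
  exact ENat.natCast_le_natCast.2 (by omega)

end Orbits

namespace GraphStruct

section Combinatorics

variable {X : Type*} [TopologicalSpace X] (G : GraphStruct X)

lemma vertexSet_finite : G.vertexSet.Finite := by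
  refine (finite_iUnion fun i => toFinite {G.edge i 0, G.edge i 1}).subset ?_
  rintro v ⟨i, h | h⟩ <;> exact mem_iUnion.2 ⟨i, by simp [h]⟩

lemma edgeSet_finite : G.edgeSet.Finite := finite_range _

lemma ncard_edgeSet_le : G.edgeSet.ncard ≤ G.numEdges := by
  rw [edgeSet, ← image_univ]
  exact (ncard_image_le finite_univ).trans (by simp)

lemma exists_edge_eq_of_notMem_vertexSet {x : X} (hx : x ∉ G.vertexSet) :
    ∃ i, ∃ s ∈ Ioo (0 : I) 1, G.edge i s = x := by
  obtain ⟨i, s, rfl⟩ := G.cover x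
  refine ⟨i, s, by_contra fun hs => hx ⟨i, ?_⟩, rfl⟩
  rcases eq_zero_or_eq_one_of_notMem_Ioo hs with rfl | rfl
  exacts [Or.inl rfl, Or.inr rfl]

def edgeInterior (i : Fin G.numEdges) : Set X := G.edge i '' Ioo 0 1

lemma edgeInterior_subset_range (i : Fin G.numEdges) : G.edgeInterior i ⊆ range (G.edge i) :=
  image_subset_range _ _

lemma compl_edgeInterior (i : Fin G.numEdges) :
    (G.edgeInterior i)ᶜ = (⋃ (j) (_ : j ≠ i), range (G.edge j)) ∪ {G.edge i 0, G.edge i 1} := by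
  ext x
  simp only [mem_compl_iff, mem_union, mem_iUnion, mem_insert_iff, mem_singleton_iff]
  constructor
  · intro hx
    obtain ⟨j, t, rfl⟩ := G.cover x
    by_cases hj : j = i
    · subst hj
      right
      rcases eq_zero_or_eq_one_of_notMem_Ioo fun ht => hx ⟨t, ht, rfl⟩ with rfl | rfl
      exacts [Or.inl rfl, Or.inr rfl]
    · exact Or.inl ⟨j, hj, t, rfl⟩
  · rintro hx ⟨s, hs, rfl⟩
    rcases hx with ⟨j, hj, t, ht⟩ | h | h
    · rcases (G.meet i j (Ne.symm hj) s t ht.symm).1 with rfl | rfl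
      exacts [hs.1.ne rfl, hs.2.ne rfl]
    · exact hs.1.ne' (G.inj i h)
    · exact hs.2.ne (G.inj i h)

end Combinatorics

section Topology

variable {X : Type*} [TopologicalSpace X] [T2Space X] (G : GraphStruct X)

lemma isClosed_range_edge (i : Fin G.numEdges) : IsClosed (range (G.edge i)) :=
  (isCompact_range (G.cont i)).isClosed

lemma isEmbedding_edge (i : Fin G.numEdges) : IsEmbedding (G.edge i) :=
  ((G.cont i).isClosedEmbedding (G.inj i)).isEmbedding

lemma isOpen_edgeInterior (i : Fin G.numEdges) : IsOpen (G.edgeInterior i) := by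
  rw [← isClosed_compl_iff, compl_edgeInterior]
  exact (isClosed_iUnion_of_finite fun j => isClosed_iUnion_of_finite fun _ =>
    G.isClosed_range_edge j).union (toFinite _).isClosed

lemma isClosed_sUnion_of_subset_edgeSet {L : Set (Set X)} (hL : L ⊆ G.edgeSet) :
    IsClosed (⋃₀ L) := by
  rw [sUnion_eq_biUnion]
  refine (G.edgeSet_finite.subset hL).isClosed_biUnion fun e he => ?_
  obtain ⟨i, rfl⟩ := hL he
  exact G.isClosed_range_edge i

open Classical in
def pushFun (i : Fin G.numEdges) (φ : I ≃ₜ I) (x : X) : X :=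
  if h : x ∈ range (G.edge i) then G.edge i (φ ((G.isEmbedding_edge i).toHomeomorph.symm ⟨x, h⟩))
  else x

variable {G} {i : Fin G.numEdges} {φ : I ≃ₜ I}

lemma pushFun_edge (s : I) : G.pushFun i φ (G.edge i s) = G.edge i (φ s) := by
  simp [pushFun]

lemma pushFun_of_notMem_range {x : X} (hx : x ∉ range (G.edge i)) : G.pushFun i φ x = x :=
  dif_neg hx

lemma pushFun_of_notMem_edgeInterior (h0 : φ 0 = 0) (h1 : φ 1 = 1) {x : X}
    (hx : x ∉ G.edgeInterior i) : G.pushFun i φ x = x := by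
  by_cases hxi : x ∈ range (G.edge i)
  · obtain ⟨s, rfl⟩ := hxi
    rcases eq_zero_or_eq_one_of_notMem_Ioo fun hs => hx ⟨s, hs, rfl⟩ with rfl | rfl
    · rw [pushFun_edge, h0]
    · rw [pushFun_edge, h1]
  · exact pushFun_of_notMem_range hxi

lemma pushFun_symm_pushFun (x : X) : G.pushFun i φ.symm (G.pushFun i φ x) = x := by
  by_cases hx : x ∈ range (G.edge i)
  · obtain ⟨s, rfl⟩ := hx
    rw [pushFun_edge, pushFun_edge, φ.symm_apply_apply]
  · rw [pushFun_of_notMem_range hx, pushFun_of_notMem_range hx]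

lemma continuous_pushFun (h0 : φ 0 = 0) (h1 : φ 1 = 1) : Continuous (G.pushFun i φ) := by
  have hcover : range (G.edge i) ∪ (G.edgeInterior i)ᶜ = univ :=
    eq_univ_of_forall fun x => (em (x ∈ G.edgeInterior i)).imp (G.edgeInterior_subset_range i ·) id
  rw [← continuousOn_univ, ← hcover]
  refine ContinuousOn.union_of_isClosed ?_ ?_ (G.isClosed_range_edge i)
    (G.isOpen_edgeInterior i).isClosed_compl
  · rw [continuousOn_iff_continuous_domRestrict]
    have hrestrict : (range (G.edge i)).domRestrict (G.pushFun i φ) =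
        G.edge i ∘ φ ∘ (G.isEmbedding_edge i).toHomeomorph.symm := by
      funext y
      exact dif_pos y.2
    rw [hrestrict]
    exact (G.cont i).comp (φ.continuous.comp (Homeomorph.continuous _))
  · exact continuousOn_id.congr fun x hx => pushFun_of_notMem_edgeInterior h0 h1 hx

variable (G i φ) in
def pushHomeomorph (h0 : φ 0 = 0) (h1 : φ 1 = 1) : X ≃ₜ X where
  toFun := G.pushFun i φ
  invFun := G.pushFun i φ.symm
  left_inv := pushFun_symm_pushFun
  right_inv x := by simpa using pushFun_symm_pushFun (φ := φ.symm) x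
  continuous_toFun := continuous_pushFun h0 h1
  continuous_invFun := continuous_pushFun (φ.symm_apply_eq.2 h0.symm) (φ.symm_apply_eq.2 h1.symm)

variable {s : I}

lemma edgeInterior_subset_homeoOrbit (hs : s ∈ Ioo 0 1) :
    G.edgeInterior i ⊆ homeoOrbit (G.edge i s) := by
  rintro _ ⟨t, ht, rfl⟩
  obtain ⟨φ, h0, h1, rfl⟩ := exists_homeomorph_apply_eq hs ht
  exact ⟨G.pushHomeomorph i φ h0 h1, pushFun_edge s⟩

lemma range_edge_subset_closure_homeoOrbit (hs : s ∈ Ioo 0 1) :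
    range (G.edge i) ⊆ closure (homeoOrbit (G.edge i s)) :=
  calc range (G.edge i) = G.edge i '' closure (Ioo 0 1) := by
        rw [closure_Ioo_zero_one, image_univ]
    _ ⊆ closure (G.edgeInterior i) := image_closure_subset_closure_image (G.cont i)
    _ ⊆ closure (homeoOrbit (G.edge i s)) := closure_mono (edgeInterior_subset_homeoOrbit hs)

lemma range_edge_subset_of_mem {S : Set X} (hS : IsClosed S) (hSinv : InvariantUnder ⊤ S)
    (hs : s ∈ Ioo 0 1) (hsS : G.edge i s ∈ S) : range (G.edge i) ⊆ S :=
  (range_edge_subset_closure_homeoOrbit hs).trans (closure_homeoOrbit_subset hS hSinv hsS)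

variable (G)

lemma exists_mem_edgeSet_subset {S U : Set X} (hS : IsClosed S) (hSinv : InvariantUnder ⊤ S)
    (hU : IsOpen U) (hUS : U ⊆ S) {z : X} (hz : z ∈ U) : ∃ e ∈ G.edgeSet, z ∈ e ∧ e ⊆ S := by
  obtain ⟨j, b, rfl⟩ := G.cover z
  obtain ⟨t, htU, ht⟩ :=
    dense_Ioo_zero_one.inter_open_nonempty _ (hU.preimage (G.cont j)) ⟨b, hz⟩
  exact ⟨range (G.edge j), ⟨j, rfl⟩, mem_range_self b,
    range_edge_subset_of_mem hS hSinv ht (hUS htU)⟩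

theorem closure_homeoOrbit_eq_vertices_or_edges (x : X) :
    (∃ V ⊆ G.vertexSet, V.Nonempty ∧ closure (homeoOrbit x) = V) ∨
    (∃ L ⊆ G.edgeSet, L.Nonempty ∧ closure (homeoOrbit x) = ⋃₀ L) := by
  by_cases hV : homeoOrbit x ⊆ G.vertexSet
  · exact Or.inl ⟨_, hV, ⟨x, mem_homeoOrbit_self x⟩,
      (G.vertexSet_finite.subset hV).isClosed.closure_eq⟩
  obtain ⟨y, hy, hyV⟩ := not_subset.1 hV
  obtain ⟨i, s, hs, rfl⟩ := G.exists_edge_eq_of_notMem_vertexSet hyV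
  set S := closure (homeoOrbit x)
  have hSinv : InvariantUnder ⊤ S := invariantUnder_closure_homeoOrbit x
  have hiS : range (G.edge i) ⊆ S :=
    range_edge_subset_of_mem isClosed_closure hSinv hs (subset_closure hy)
  refine Or.inr ⟨{e ∈ G.edgeSet | e ⊆ S}, sep_subset _ _, ⟨_, ⟨i, rfl⟩, hiS⟩,
    (closure_minimal ?_ (G.isClosed_sUnion_of_subset_edgeSet (sep_subset _ _))).antisymm
      (sUnion_subset fun e he => he.2)⟩
  intro z hz
  rw [← homeoOrbit_eq_of_mem hy] at hz
  obtain ⟨g, rfl⟩ := hz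
  -- `g` maps the open edge `i`, which lies in `S`, onto an open neighbourhood of `g y` in `S`
  have hgS : g '' G.edgeInterior i ⊆ S := by
    rintro _ ⟨v, hv, rfl⟩
    exact hSinv g (Subgroup.mem_top g) v (hiS (G.edgeInterior_subset_range i hv))
  obtain ⟨e, he, hze, heS⟩ := G.exists_mem_edgeSet_subset isClosed_closure hSinv
    (g.isOpenMap _ (G.isOpen_edgeInterior i)) hgS (mem_image_of_mem g ⟨s, hs, rfl⟩)
  exact ⟨e, ⟨he, heS⟩, hze⟩

lemma orbitClosures_subset :
    orbitClosures X ⊆ (𝒫 G.vertexSet \ {∅}) ∪ sUnion '' (𝒫 G.edgeSet \ {∅}) := by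
  rintro _ ⟨x, rfl⟩
  rcases G.closure_homeoOrbit_eq_vertices_or_edges x with ⟨V, hV, hne, hx⟩ | ⟨L, hL, hne, hx⟩
  · exact Or.inl ⟨hx ▸ hV, hx ▸ hne.ne_empty⟩
  · exact Or.inr ⟨L, ⟨hL, hne.ne_empty⟩, hx.symm⟩

lemma orbitClosures_finite (G : GraphStruct X) : (orbitClosures X).Finite :=
  (G.vertexSet_finite.powerset.sdiff.union (G.edgeSet_finite.powerset.sdiff.image _)).subset
    G.orbitClosures_subset

theorem ncard_orbitClosures_le :
    (orbitClosures X).ncard ≤ 2 ^ G.vertexSet.ncard + 2 ^ G.numEdges - 2 := by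
  have hV := G.vertexSet_finite
  have hE := G.edgeSet_finite
  have hpow : 2 ^ G.edgeSet.ncard ≤ 2 ^ G.numEdges := Nat.pow_le_pow_right two_pos G.ncard_edgeSet_le
  have : 1 ≤ 2 ^ G.vertexSet.ncard := Nat.one_le_two_pow
  have : 1 ≤ 2 ^ G.edgeSet.ncard := Nat.one_le_two_pow
  calc (orbitClosures X).ncard
      ≤ ((𝒫 G.vertexSet \ {∅}) ∪ sUnion '' (𝒫 G.edgeSet \ {∅})).ncard :=
        ncard_le_ncard G.orbitClosures_subset (hV.powerset.sdiff.union (hE.powerset.sdiff.image _))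
    _ ≤ (𝒫 G.vertexSet \ {∅}).ncard + (𝒫 G.edgeSet \ {∅}).ncard :=
        (ncard_union_le _ _).trans (add_le_add_right (ncard_image_le hE.powerset.sdiff) _)
    _ = (2 ^ G.vertexSet.ncard - 1) + (2 ^ G.edgeSet.ncard - 1) := by
        rw [ncard_sdiff_singleton_of_mem (empty_subset _),
          ncard_sdiff_singleton_of_mem (empty_subset _),
          ncard_powerset _ hV, ncard_powerset _ hE]
    _ ≤ 2 ^ G.vertexSet.ncard + 2 ^ G.numEdges - 2 := by omega

end Topology

end GraphStruct

end

theorem graph_full_homeo_height_finite_general (X : Type*) [MetricSpace X] (G : GraphStruct X) :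
    height (⊤ : Subgroup (X ≃ₜ X)) ≠ ⊤ ∧
    (¬ Nonempty (X ≃ₜ Circle) →
      (∀ x : X,
        (∃ V ⊆ G.vertexSet, V.Nonempty ∧
          closure {y | ∃ f : X ≃ₜ X, f x = y} = V) ∨
        (∃ L ⊆ G.edgeSet, L.Nonempty ∧
          closure {y | ∃ f : X ≃ₜ X, f x = y} = ⋃₀ L)) ∧
      {S : Set X | ∃ x : X, S = closure {y | ∃ f : X ≃ₜ X, f x = y}}.ncard ≤
        2 ^ G.vertexSet.ncard + 2 ^ G.numEdges - 2 ∧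
      height (⊤ : Subgroup (X ≃ₜ X)) ≤
        ((2 ^ G.vertexSet.ncard + 2 ^ G.numEdges - 3 : ℕ) : ℕ∞)) := by
  have hcard := G.ncard_orbitClosures_le
  have hheight : height (⊤ : Subgroup (X ≃ₜ X)) ≤
      ((2 ^ G.vertexSet.ncard + 2 ^ G.numEdges - 3 : ℕ) : ℕ∞) :=
    (height_top_le_ncard_orbitClosures_sub_one G.orbitClosures_finite).trans
      (ENat.natCast_le_natCast.2 (by omega))
  exact ⟨ne_top_of_le_ne_top (ENat.natCast_ne_top _) hheight,
    fun _ => ⟨G.closure_homeoOrbit_eq_vertices_or_edges, hcard, hheight⟩⟩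

/-- A topological graph has finite full-homeomorphism-group height; if it is not a circle
every orbit closure is a union of vertices or a union of closed edges, giving the bound
`h(Homeo(X), X) ≤ 2^{|V|} + 2^{|E|} − 3`. -/
theorem graph_full_homeo_height_finite (X : Type*) [MetricSpace X] [CompactSpace X]
    [ConnectedSpace X] (G : GraphStruct X) :
    height (⊤ : Subgroup (X ≃ₜ X)) ≠ ⊤ ∧
    (¬ Nonempty (X ≃ₜ Circle) →
      (∀ x : X,
        (∃ V ⊆ G.vertexSet, V.Nonempty ∧
          closure {y | ∃ f : X ≃ₜ X, f x = y} = V) ∨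
        (∃ L ⊆ G.edgeSet, L.Nonempty ∧
          closure {y | ∃ f : X ≃ₜ X, f x = y} = ⋃₀ L)) ∧
      {S : Set X | ∃ x : X, S = closure {y | ∃ f : X ≃ₜ X, f x = y}}.ncard ≤
        2 ^ G.vertexSet.ncard + 2 ^ G.numEdges - 2 ∧
      height (⊤ : Subgroup (X ≃ₜ X)) ≤
        ((2 ^ G.vertexSet.ncard + 2 ^ G.numEdges - 3 : ℕ) : ℕ∞)) :=
  graph_full_homeo_height_finite_general X G
end
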